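/- There exists a unique ŷ ∈ (0, δ·C^{α−1}) with Δℒ(ŷ) = 0; moreover Δℒ(y) > 0 for all y ∈ (0, ŷ) and Δℒ(y) < 0 for all y ∈ (ŷ, δ·C^{α−1}]. -/

import Mathlib

/-!
Put `t = g(h(y)) = (y/δ)^{1/(α-1)}`. As `y` increases through `(0, δ C^{α-1}]`, `t` decreases
through `[C, ∞)`, and since `y = δ t^{α-1}`,
`Δℒ(y) = G(t) := (1/α - 1) t^α + (C - δK) t^{α-1} - C^α/α`.
Now `G'(t) = (1-α) t^{α-2} (t - C + δK) > 0` for `t > C`, `G(C) = -δ K C^{α-1} < 0`, and `G` is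
eventually positive: it tends to `+∞` if `0 < α` and to `-C^α/α > 0` if `α < 0`. So `G` has a single
zero `t̂ > C`, and `ŷ = δ t̂^{α-1}`.
-/

open Real Set Filter

theorem StrictAntiOn.pos_neg_of_eq_zero {X Y : Type*} [LinearOrder X] [Preorder Y] [Zero Y]
    {f : X → Y} {a b x₀ : X} (hf : StrictAntiOn f (Ioc a b)) (hx₀ : x₀ ∈ Ioo a b)
    (hfx₀ : f x₀ = 0) :
    (∀ x ∈ Ioo a b, f x = 0 → x = x₀) ∧ (∀ x ∈ Ioo a x₀, 0 < f x) ∧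
      (∀ x ∈ Ioc x₀ b, f x < 0) := by
  have hx₀' : x₀ ∈ Ioc a b := Ioo_subset_Ioc_self hx₀
  refine ⟨fun x hx hfx => hf.injOn (Ioo_subset_Ioc_self hx) hx₀' (hfx.trans hfx₀.symm),
    fun x hx => ?_, fun x hx => ?_⟩
  · exact hfx₀ ▸ hf ⟨hx.1, hx.2.le.trans hx₀.2.le⟩ hx₀' hx.2
  · exact hfx₀ ▸ hf hx₀' ⟨hx₀.1.trans hx.1, hx.2⟩ hx.1

noncomputable def lagrangianGap (α δ K C t : ℝ) : ℝ :=
  (1 / α - 1) * t ^ α + (C - δ * K) * t ^ (α - 1) - C ^ α / α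

section lagrangianGap

variable {α δ K C t : ℝ}

theorem lagrangianGap_eq_utility_sub (hδ : δ ≠ 0) (ht : 0 < t) :
    lagrangianGap α δ K C t = t ^ α / α - C ^ α / α - δ * t ^ (α - 1) * ((t - C) / δ + K) := by
  have htα : t ^ α = t ^ (α - 1) * t := by
    rw [← rpow_add_one ht.ne', sub_add_cancel]
  rw [lagrangianGap, htα]
  field_simp
  ring

theorem lagrangianGap_self (hα0 : α ≠ 0) (hC : 0 < C) :
    lagrangianGap α δ K C C = -(δ * K * C ^ (α - 1)) := by
  rw [lagrangianGap, show C ^ α = C ^ (α - 1) * C by rw [← rpow_add_one hC.ne', sub_add_cancel]]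
  field_simp
  ring

theorem hasDerivAt_lagrangianGap (hα0 : α ≠ 0) (ht : 0 < t) :
    HasDerivAt (lagrangianGap α δ K C) ((1 - α) * t ^ (α - 2) * (t - (C - δ * K))) t := by
  refine (((hasDerivAt_rpow_const (Or.inl ht.ne')).const_mul (1 / α - 1)).add
    ((hasDerivAt_rpow_const (p := α - 1) (Or.inl ht.ne')).const_mul (C - δ * K))).sub_const
    (C ^ α / α) |>.congr_deriv ?_
  rw [show α - 1 - 1 = α - 2 by ring, show α - 1 = α - 2 + 1 by ring, rpow_add_one ht.ne']
  field_simp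
  ring

theorem continuousOn_lagrangianGap (hα0 : α ≠ 0) (hC : 0 < C) :
    ContinuousOn (lagrangianGap α δ K C) (Ici C) := fun _ ht =>
  (hasDerivAt_lagrangianGap hα0 (hC.trans_le ht)).continuousAt.continuousWithinAt

theorem strictMonoOn_lagrangianGap (hα0 : α ≠ 0) (hα : α < 1) (hδK : 0 ≤ δ * K) (hC : 0 < C) :
    StrictMonoOn (lagrangianGap α δ K C) (Ici C) := by
  refine strictMonoOn_of_deriv_pos (convex_Ici C) (continuousOn_lagrangianGap hα0 hC) ?_
  intro t ht
  rw [interior_Ici, mem_Ioi] at ht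
  have ht0 : 0 < t := hC.trans ht
  rw [(hasDerivAt_lagrangianGap hα0 ht0).deriv]
  have : 0 < t - (C - δ * K) := by linarith
  have : 0 < 1 - α := by linarith
  positivity

theorem eventually_pos_lagrangianGap (hα0 : α ≠ 0) (hα : α < 1) (hC : 0 < C) :
    ∀ᶠ t in atTop, 0 < lagrangianGap α δ K C t := by
  have hlim₁ : Tendsto (fun t : ℝ => t ^ (α - 1)) atTop (nhds 0) := by
    simpa using tendsto_rpow_neg_atTop (y := 1 - α) (by linarith)
  rcases hα0.lt_or_gt with hneg | hpos
  · have hlim₀ : Tendsto (fun t : ℝ => t ^ α) atTop (nhds 0) := by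
      simpa using tendsto_rpow_neg_atTop (y := -α) (by linarith)
    have hlim := ((hlim₀.const_mul (1 / α - 1)).add (hlim₁.const_mul (C - δ * K))).sub_const
      (C ^ α / α)
    refine hlim.eventually (eventually_gt_nhds ?_)
    have : C ^ α / α < 0 := div_neg_of_pos_of_neg (rpow_pos_of_pos hC α) hneg
    simpa using this
  · have hcoef : 0 < 1 / α - 1 := by
      rw [sub_pos, lt_div_iff₀ hpos, one_mul]
      exact hα
    have hlim := ((tendsto_rpow_atTop hpos).const_mul_atTop hcoef).atTop_add
      ((hlim₁.const_mul (C - δ * K)).sub_const (C ^ α / α))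
    refine (hlim.congr fun t => ?_).eventually_gt_atTop 0
    rw [lagrangianGap]
    ring

theorem exists_lagrangianGap_eq_zero (hα0 : α ≠ 0) (hα : α < 1) (hδK : 0 < δ * K)
    (hC : 0 < C) : ∃ t, C < t ∧ lagrangianGap α δ K C t = 0 := by
  have hGC : lagrangianGap α δ K C C < 0 := by
    rw [lagrangianGap_self hα0 hC, neg_lt_zero]
    exact mul_pos hδK (rpow_pos_of_pos hC _)
  obtain ⟨t₁, hGt₁, hCt₁⟩ :=
    ((eventually_pos_lagrangianGap hα0 hα hC).and (eventually_ge_atTop C)).exists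
  have hCt₁' : C < t₁ := hCt₁.lt_of_ne (by rintro rfl; linarith)
  obtain ⟨t, ht, hGt⟩ := intermediate_value_Ioo hCt₁
    ((continuousOn_lagrangianGap hα0 hC).mono Icc_subset_Ici_self) ⟨hGC, hGt₁⟩
  exact ⟨t, ht.1, hGt⟩

end lagrangianGap

section rpowInv

variable {δ C p : ℝ}

theorem mapsTo_div_rpow_inv (hδ : 0 < δ) (hC : 0 < C) (hp : p < 0) :
    MapsTo (fun y => (y / δ) ^ p⁻¹) (Ioc 0 (δ * C ^ p)) (Ici C) := fun _ hy =>
  (le_rpow_inv_iff_of_neg hC (div_pos hy.1 hδ) hp).2 ((div_le_iff₀' hδ).2 hy.2)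

theorem strictAntiOn_div_rpow_inv (hδ : 0 < δ) (hp : p < 0) :
    StrictAntiOn (fun y => (y / δ) ^ p⁻¹) (Ioi 0) := fun _ hy₁ _ _ hlt =>
  rpow_lt_rpow_of_neg (div_pos hy₁ hδ) (div_lt_div_of_pos_right hlt hδ) (inv_lt_zero.2 hp)

end rpowInv

/-- there exists a unique ŷ ∈ (0, δ·C^{α−1}) with Δℒ(ŷ) = 0;
moreover Δℒ > 0 on (0, ŷ) and Δℒ < 0 on (ŷ, δ·C^{α−1}]. -/
theorem stmt10
    (α δ K C : ℝ) (hα : α < 1) (hα0 : α ≠ 0) (hδ : δ ∈ Set.Ioc (0:ℝ) 1)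
    (hK : 0 < K) (hC : 0 < C)
    (u : ℝ → ℝ) (hu : ∀ x, u x = x ^ α / α)
    (g : ℝ → ℝ) (hg : ∀ x, g x = δ * max (x - K) 0 + C)
    (I : ℝ → ℝ) (hI : ∀ x, I x = x ^ (1 / (α - 1)))
    (h : ℝ → ℝ) (hh : ∀ y, h y = (I (y / δ) - C) / δ + K)
    (ΔL : ℝ → ℝ) (hΔL : ∀ y, ΔL y = u (g (h y)) - u C - y * h y) :
    ∃ yhat ∈ Set.Ioo 0 (δ * C ^ (α - 1)),
      ΔL yhat = 0 ∧
      (∀ y ∈ Set.Ioo 0 (δ * C ^ (α - 1)), ΔL y = 0 → y = yhat) ∧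
      (∀ y ∈ Set.Ioo 0 yhat, 0 < ΔL y) ∧
      (∀ y ∈ Set.Ioc yhat (δ * C ^ (α - 1)), ΔL y < 0) := by
  obtain ⟨hδ0, -⟩ := hδ
  have hα1 : α - 1 < 0 := by linarith
  set T : ℝ → ℝ := fun y => (y / δ) ^ (α - 1)⁻¹ with hT
  have hT_mapsTo : MapsTo T (Ioc 0 (δ * C ^ (α - 1))) (Ici C) := mapsTo_div_rpow_inv hδ0 hC hα1
  have hΔL_eq : EqOn ΔL (lagrangianGap α δ K C ∘ T) (Ioc 0 (δ * C ^ (α - 1))) := by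
    intro y hy
    have hTC : C ≤ T y := hT_mapsTo hy
    have hy_eq : δ * T y ^ (α - 1) = y := by
      rw [hT, rpow_inv_rpow (div_pos hy.1 hδ0).le hα1.ne, mul_div_cancel₀ _ hδ0.ne']
    have hh_eq : h y = (T y - C) / δ + K := by rw [hh, hI, one_div]
    have hg_eq : g (h y) = T y := by
      rw [hg, hh_eq, add_sub_cancel_right, max_eq_left (div_nonneg (sub_nonneg.2 hTC) hδ0.le),
        mul_div_cancel₀ _ hδ0.ne', sub_add_cancel]
    rw [Function.comp_apply, lagrangianGap_eq_utility_sub hδ0.ne' (hC.trans_le hTC), hy_eq, hΔL,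
      hg_eq, hu, hu, hh_eq]
  have hanti : StrictAntiOn ΔL (Ioc 0 (δ * C ^ (α - 1))) :=
    ((strictMonoOn_lagrangianGap hα0 hα (by positivity) hC).comp_strictAntiOn
      ((strictAntiOn_div_rpow_inv hδ0 hα1).mono Ioc_subset_Ioi_self) hT_mapsTo).congr hΔL_eq.symm
  obtain ⟨t₀, hCt₀, ht₀⟩ := exists_lagrangianGap_eq_zero hα0 hα (mul_pos hδ0 hK) hC
  have ht₀pos : 0 < t₀ := hC.trans hCt₀
  have hy₀ : δ * t₀ ^ (α - 1) ∈ Ioo 0 (δ * C ^ (α - 1)) :=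
    ⟨by positivity, mul_lt_mul_of_pos_left (rpow_lt_rpow_of_neg hC hCt₀ hα1) hδ0⟩
  have hT₀ : T (δ * t₀ ^ (α - 1)) = t₀ := by
    show (δ * t₀ ^ (α - 1) / δ) ^ (α - 1)⁻¹ = t₀
    rw [mul_div_cancel_left₀ _ hδ0.ne', rpow_rpow_inv ht₀pos.le hα1.ne]
  have hΔL₀ : ΔL (δ * t₀ ^ (α - 1)) = 0 := by
    rw [hΔL_eq (Ioo_subset_Ioc_self hy₀), Function.comp_apply, hT₀, ht₀]
  exact ⟨_, hy₀, hΔL₀, hanti.pos_neg_of_eq_zero hy₀ hΔL₀⟩
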